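/- arXiv:1510.01655 — 4 statements merged into one kernel-verified Lean document; each statement's English description precedes it below -/
import Mathlib

section
/- The restriction of the 2D rotational operator rot(v) = ∂₁v₂ - ∂₂v₁ to the L²(K)-orthogonal complement G_{k-2}(K)^⊥ of the gradient space inside [P_{k-2}(K)]² is a linear isomorphism onto P_{k-3}(K). -/
open MvPolynomial MeasureTheory

/-!
The `L²(K)` pairing of polynomial vector fields is positive definite, since a polynomial that
vanishes on the nonempty open set `K` is zero. As `G_{k-2}(K)` is finite-dimensional, every
`v ∈ [P_{k-2}]²` therefore splits as `g + z` with `g ∈ G_{k-2}` and `z ⊥ G_{k-2}`, and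
`z ∈ [P_{k-2}]²` because `G_{k-2} ⊆ [P_{k-2}]²`. Since `rot ∘ ∇ = 0`, `rot` maps
`[P_{k-2}]² ∩ G_{k-2}^⊥` onto `rot [P_{k-2}]² = P_{k-3}` (`q = rot (0, ∫ q dx)`). It is injective
there by the polynomial Poincaré lemma: a rot-free `v ∈ [P_{k-2}]²` is the gradient of some
`p ∈ P_{k-1}`, so it lies in `G_{k-2} ∩ G_{k-2}^⊥ = 0`.
-/

theorem LinearMap.BilinForm.exists_sub_mem_orthogonal {K V : Type*} [Field K] [AddCommGroup V]
    [Module K V] (B : LinearMap.BilinForm K V) {G : Submodule K V} [FiniteDimensional K G]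
    (hG : ∀ g ∈ G, B g g = 0 → g = 0) (v : V) : ∃ g ∈ G, v - g ∈ B.orthogonal G := by
  set φ : G →ₗ[K] Module.Dual K G := (B.restrict G).flip
  have hφ : Function.Surjective φ := by
    refine (LinearMap.injective_iff_surjective_of_finrank_eq_finrank
      Subspace.dual_finrank_eq.symm).mp <| (injective_iff_map_eq_zero φ).mpr fun g hg => ?_
    exact Subtype.ext (hG g g.2 (LinearMap.congr_fun hg g))
  obtain ⟨g, hg⟩ := hφ ((B.flip v).domRestrict G)
  refine ⟨g, g.2, LinearMap.BilinForm.mem_orthogonal_iff.mpr fun h hh => ?_⟩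
  have hgh : B h g = B h v := LinearMap.congr_fun hg ⟨h, hh⟩
  rw [map_sub, hgh, sub_self]

theorem LinearMap.BilinForm.bijOn_inf_orthogonal {K V U : Type*} [Field K] [AddCommGroup V]
    [Module K V] [AddCommGroup U] [Module K U] (B : LinearMap.BilinForm K V) (T : V →ₗ[K] U)
    {W G : Submodule K V} [FiniteDimensional K G] (hG : ∀ g ∈ G, B g g = 0 → g = 0)
    (hker : W ⊓ LinearMap.ker T = G) :
    Set.BijOn T (W ⊓ B.orthogonal G : Submodule K V) (W.map T) := by
  have hGW : G ≤ W := hker ▸ inf_le_left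
  refine ⟨fun v hv => Submodule.mem_map_of_mem hv.1, fun u hu v hv huv => ?_, ?_⟩
  · have hmem : u - v ∈ G := hker ▸ ⟨sub_mem hu.1 hv.1, by simp [huv]⟩
    have hortho : u - v ∈ B.orthogonal G := sub_mem hu.2 hv.2
    exact sub_eq_zero.mp (hG _ hmem (hortho _ hmem))
  · rintro _ ⟨w, hw, rfl⟩
    obtain ⟨g, hg, hwg⟩ := B.exists_sub_mem_orthogonal hG w
    have hTg : T g = 0 := (hker ▸ hg : g ∈ W ⊓ LinearMap.ker T).2
    exact ⟨w - g, ⟨sub_mem hw (hGW hg), hwg⟩, by rw [map_sub, hTg, sub_zero]⟩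

theorem MvPolynomial.eq_zero_of_eval_eq_zero_on_isOpen {σ 𝕜 : Type*} [Fintype σ]
    [NontriviallyNormedField 𝕜] {p : MvPolynomial σ 𝕜} {U : Set (σ → 𝕜)} (hU : IsOpen U)
    (hne : U.Nonempty) (h : ∀ x ∈ U, eval x p = 0) : p = 0 := by
  obtain ⟨x, hx⟩ := hne
  obtain ⟨r, hr, hball⟩ := Metric.isOpen_iff.mp hU x hx
  refine funext_set (fun i => Metric.ball (x i) r)
    (fun i => infinite_of_mem_nhds (x i) (Metric.ball_mem_nhds _ hr)) fun y hy => ?_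
  rw [map_zero, h y (hball (by rwa [ball_pi x hr]))]

theorem IsOpen.eqOn_zero_of_setIntegral_eq_zero {X : Type*} [TopologicalSpace X]
    [MeasurableSpace X] [OpensMeasurableSpace X] {μ : Measure X} [μ.IsOpenPosMeasure]
    {U : Set X} {f : X → ℝ} (hU : IsOpen U) (hf : ContinuousOn f U) (hf₀ : ∀ x ∈ U, 0 ≤ f x)
    (hint : IntegrableOn f U μ) (h : ∫ x in U, f x ∂μ = 0) : Set.EqOn f 0 U :=
  Measure.eqOn_open_of_ae_eq
    ((setIntegral_eq_zero_iff_of_nonneg_ae (ae_restrict_of_forall_mem hU.measurableSet hf₀)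
      hint).mp h) hU hf continuousOn_const

namespace MvPolynomial

section pderiv

variable {σ R : Type*} [CommSemiring R]

theorem pderiv_pderiv_comm (i j : σ) (p : MvPolynomial σ R) :
    pderiv i (pderiv j p) = pderiv j (pderiv i p) := by
  rcases eq_or_ne i j with rfl | hij
  · rfl
  induction p using MvPolynomial.induction_on' with
  | monomial m a =>
    simp only [pderiv_monomial, Finsupp.tsub_apply, Finsupp.single_eq_of_ne hij,
      Finsupp.single_eq_of_ne hij.symm, tsub_zero]
    rw [tsub_right_comm, mul_right_comm]
  | add p q hp hq => simp only [map_add, hp, hq]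

theorem map_restrictTotalDegree_le {f : MvPolynomial σ R →ₗ[R] MvPolynomial σ R} {n n' : ℕ}
    (h : ∀ m : σ →₀ ℕ, m.degree ≤ n → f (monomial m 1) ∈ restrictTotalDegree σ R n') :
    (restrictTotalDegree σ R n).map f ≤ restrictTotalDegree σ R n' := by
  rw [restrictTotalDegree, restrictSupport_eq_span, Submodule.map_span_le]
  rintro _ ⟨m, hm, rfl⟩
  exact h m hm

theorem pderiv_mem_restrictTotalDegree (i : σ) {n : ℕ} {p : MvPolynomial σ R}
    (hp : p ∈ restrictTotalDegree σ R (n + 1)) : pderiv i p ∈ restrictTotalDegree σ R n := by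
  refine map_restrictTotalDegree_le (f := (pderiv i).toLinearMap) (fun m hm => ?_)
    (Submodule.mem_map_of_mem hp)
  rw [Derivation.coeFn_coe, pderiv_monomial, one_mul, restrictTotalDegree,
    monomial_mem_restrictSupport]
  rcases Nat.eq_zero_or_pos (m i) with h | h
  · simp [h]
  · left
    have : m - Finsupp.single i 1 + Finsupp.single i 1 = m :=
      tsub_add_cancel_of_le (Finsupp.single_le_iff.mpr h)
    change (m - Finsupp.single i 1).degree ≤ n
    rw [← this, map_add, Finsupp.degree_single] at hm
    omega

theorem pderiv_eq_zero_of_mem_restrictTotalDegree_zero (i : σ) {p : MvPolynomial σ R}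
    (hp : p ∈ restrictTotalDegree σ R 0) : pderiv i p = 0 := by
  rw [mem_restrictTotalDegree, Nat.le_zero, totalDegree_eq_zero_iff_eq_C] at hp
  rw [hp, pderiv_C]

end pderiv

section pintegral

variable {σ 𝕜 : Type*} [Field 𝕜]

noncomputable def pintegral (i : σ) : MvPolynomial σ 𝕜 →ₗ[𝕜] MvPolynomial σ 𝕜 :=
  (basisMonomials σ 𝕜).constr 𝕜 fun m => monomial (m + Finsupp.single i 1) (m i + 1 : 𝕜)⁻¹

theorem pintegral_monomial (i : σ) (m : σ →₀ ℕ) (a : 𝕜) :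
    pintegral i (monomial m a) = monomial (m + Finsupp.single i 1) ((m i + 1 : 𝕜)⁻¹ * a) := by
  have : monomial m a = a • basisMonomials σ 𝕜 m := by simp [smul_monomial]
  rw [this, map_smul, pintegral, Module.Basis.constr_basis, smul_monomial, smul_eq_mul, mul_comm]

theorem pderiv_pintegral [CharZero 𝕜] (i : σ) (p : MvPolynomial σ 𝕜) :
    pderiv i (pintegral i p) = p := by
  induction p using MvPolynomial.induction_on' with
  | monomial m a =>
    rw [pintegral_monomial, pderiv_monomial, add_tsub_cancel_right]
    congr 1
    field_simp
    rw [Finsupp.add_apply, Finsupp.single_eq_same]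
    push_cast
    ring
  | add p q hp hq => simp only [map_add, hp, hq]

theorem pderiv_pintegral_of_ne {i j : σ} (hij : i ≠ j) (p : MvPolynomial σ 𝕜) :
    pderiv j (pintegral i p) = pintegral i (pderiv j p) := by
  induction p using MvPolynomial.induction_on' with
  | monomial m a =>
    have hexp : m + Finsupp.single i 1 - Finsupp.single j 1 =
        m - Finsupp.single j 1 + Finsupp.single i 1 := by
      classical
      ext k
      simp only [Finsupp.add_apply, Finsupp.tsub_apply, Finsupp.single_apply]
      split_ifs <;> grind
    rw [pintegral_monomial, pderiv_monomial, pderiv_monomial, pintegral_monomial, hexp]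
    congr 1
    simp only [Finsupp.add_apply, Finsupp.tsub_apply, Finsupp.single_eq_of_ne hij,
      Finsupp.single_eq_of_ne hij.symm, add_zero, tsub_zero]
    ring
  | add p q hp hq => simp only [map_add, hp, hq]

theorem pintegral_mem_restrictTotalDegree (i : σ) {n : ℕ} {p : MvPolynomial σ 𝕜}
    (hp : p ∈ restrictTotalDegree σ 𝕜 n) : pintegral i p ∈ restrictTotalDegree σ 𝕜 (n + 1) := by
  refine map_restrictTotalDegree_le (fun m hm => ?_) (Submodule.mem_map_of_mem hp)
  rw [pintegral_monomial, restrictTotalDegree, monomial_mem_restrictSupport]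
  left
  change (m + Finsupp.single i 1).degree ≤ n + 1
  rw [map_add, Finsupp.degree_single]
  omega

end pintegral

section Plane

variable {R : Type*} [CommRing R]

noncomputable def grad :
    MvPolynomial (Fin 2) R →ₗ[R] MvPolynomial (Fin 2) R × MvPolynomial (Fin 2) R :=
  (pderiv (R := R) (0 : Fin 2)).toLinearMap.prod (pderiv 1).toLinearMap

noncomputable def rot :
    MvPolynomial (Fin 2) R × MvPolynomial (Fin 2) R →ₗ[R] MvPolynomial (Fin 2) R :=
  (pderiv (R := R) (0 : Fin 2)).toLinearMap ∘ₗ LinearMap.snd R _ _ -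
    (pderiv (R := R) (1 : Fin 2)).toLinearMap ∘ₗ LinearMap.fst R _ _

theorem grad_apply (p : MvPolynomial (Fin 2) R) : grad p = (pderiv 0 p, pderiv 1 p) := rfl

theorem rot_apply (v : MvPolynomial (Fin 2) R × MvPolynomial (Fin 2) R) :
    rot v = pderiv 0 v.2 - pderiv 1 v.1 := rfl

theorem rot_grad (p : MvPolynomial (Fin 2) R) : rot (grad p) = 0 := by
  rw [rot_apply, grad_apply, pderiv_pderiv_comm, sub_self]

theorem grad_mem_prod_restrictTotalDegree {n : ℕ} {p : MvPolynomial (Fin 2) R}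
    (hp : p ∈ restrictTotalDegree (Fin 2) R (n + 1)) :
    grad p ∈ (restrictTotalDegree (Fin 2) R n).prod (restrictTotalDegree (Fin 2) R n) :=
  ⟨pderiv_mem_restrictTotalDegree 0 hp, pderiv_mem_restrictTotalDegree 1 hp⟩

theorem map_rot_prod_restrictTotalDegree_zero :
    ((restrictTotalDegree (Fin 2) R 0).prod (restrictTotalDegree (Fin 2) R 0)).map rot = ⊥ := by
  rw [Submodule.eq_bot_iff]
  rintro _ ⟨⟨v₁, v₂⟩, ⟨hv₁, hv₂⟩, rfl⟩
  rw [rot_apply, pderiv_eq_zero_of_mem_restrictTotalDegree_zero 0 hv₂,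
    pderiv_eq_zero_of_mem_restrictTotalDegree_zero 1 hv₁, sub_zero]

end Plane

section PlaneCharZero

variable {𝕜 : Type*} [Field 𝕜] [CharZero 𝕜]

theorem exists_grad_eq_of_rot_eq_zero {n : ℕ}
    {v : MvPolynomial (Fin 2) 𝕜 × MvPolynomial (Fin 2) 𝕜}
    (hv : v ∈ (restrictTotalDegree (Fin 2) 𝕜 n).prod (restrictTotalDegree (Fin 2) 𝕜 n))
    (hrot : rot v = 0) : ∃ p ∈ restrictTotalDegree (Fin 2) 𝕜 (n + 1), grad p = v := by
  obtain ⟨v₁, v₂⟩ := v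
  obtain ⟨hv₁, hv₂⟩ := hv
  have hclosed : pderiv 0 v₂ = pderiv 1 v₁ := sub_eq_zero.mp hrot
  have hI₀ : pintegral 0 v₁ ∈ restrictTotalDegree (Fin 2) 𝕜 (n + 1) :=
    pintegral_mem_restrictTotalDegree 0 hv₁
  set w := v₂ - pderiv 1 (pintegral 0 v₁)
  have hw : w ∈ restrictTotalDegree (Fin 2) 𝕜 n :=
    sub_mem hv₂ (pderiv_mem_restrictTotalDegree 1 hI₀)
  have hw₀ : pderiv 0 w = 0 := by
    rw [map_sub, pderiv_pderiv_comm, pderiv_pintegral, hclosed, sub_self]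
  refine ⟨pintegral 0 v₁ + pintegral 1 w,
    add_mem hI₀ (pintegral_mem_restrictTotalDegree 1 hw), ?_⟩
  rw [grad_apply, map_add, map_add, pderiv_pintegral, pderiv_pintegral,
    pderiv_pintegral_of_ne (by decide), hw₀, map_zero, add_zero, add_sub_cancel]

theorem prod_restrictTotalDegree_inf_ker_rot (n : ℕ) :
    (restrictTotalDegree (Fin 2) 𝕜 n).prod (restrictTotalDegree (Fin 2) 𝕜 n) ⊓
      LinearMap.ker rot = (restrictTotalDegree (Fin 2) 𝕜 (n + 1)).map grad := by
  ext v
  constructor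
  · rintro ⟨hv, hrot⟩
    exact exists_grad_eq_of_rot_eq_zero hv hrot
  · rintro ⟨p, hp, rfl⟩
    exact ⟨grad_mem_prod_restrictTotalDegree hp, rot_grad p⟩

theorem map_rot_prod_restrictTotalDegree_succ (n : ℕ) :
    ((restrictTotalDegree (Fin 2) 𝕜 (n + 1)).prod
      (restrictTotalDegree (Fin 2) 𝕜 (n + 1))).map rot = restrictTotalDegree (Fin 2) 𝕜 n := by
  refine le_antisymm ?_ fun q hq => ?_
  · rintro _ ⟨v, ⟨hv₁, hv₂⟩, rfl⟩
    exact sub_mem (pderiv_mem_restrictTotalDegree 0 hv₂) (pderiv_mem_restrictTotalDegree 1 hv₁)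
  · refine ⟨(0, pintegral 0 q), ⟨zero_mem _, pintegral_mem_restrictTotalDegree 0 hq⟩, ?_⟩
    rw [rot_apply, pderiv_pintegral, map_zero, sub_zero]

end PlaneCharZero

section L2

variable {K : Set (ℝ × ℝ)}

theorem continuous_eval_plane (p : MvPolynomial (Fin 2) ℝ) :
    Continuous fun x : ℝ × ℝ => eval ![x.1, x.2] p :=
  p.continuous_eval.comp Homeomorph.finTwoArrow.symm.continuous

theorem integrableOn_eval_plane (hK : Bornology.IsBounded K) (p : MvPolynomial (Fin 2) ℝ) :
    IntegrableOn (fun x : ℝ × ℝ => eval ![x.1, x.2] p) K :=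
  ((continuous_eval_plane p).continuousOn.integrableOn_compact hK.isCompact_closure).mono_set
    subset_closure

theorem eq_zero_of_eval_eq_zero_on_plane (hK : IsOpen K) (hne : K.Nonempty)
    {p : MvPolynomial (Fin 2) ℝ} (h : ∀ x ∈ K, eval ![x.1, x.2] p = 0) : p = 0 := by
  refine eq_zero_of_eval_eq_zero_on_isOpen (hK.preimage Homeomorph.finTwoArrow.continuous)
    (hne.preimage Homeomorph.finTwoArrow.surjective) fun y hy => ?_
  rw [← Homeomorph.finTwoArrow.symm_apply_apply y]
  exact h _ hy

noncomputable def setIntegralEval (hK : Bornology.IsBounded K) :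
    MvPolynomial (Fin 2) ℝ →ₗ[ℝ] ℝ where
  toFun p := ∫ x in K, eval ![x.1, x.2] p
  map_add' p q := by
    simp only [map_add]
    exact integral_add (integrableOn_eval_plane hK p) (integrableOn_eval_plane hK q)
  map_smul' c p := by
    simp only [smul_eval, RingHom.id_apply, smul_eq_mul]
    exact integral_const_mul c _

noncomputable def l2Form (hK : Bornology.IsBounded K) :
    LinearMap.BilinForm ℝ (MvPolynomial (Fin 2) ℝ × MvPolynomial (Fin 2) ℝ) :=
  ((LinearMap.mul ℝ _).compl₁₂ (LinearMap.fst ℝ _ _) (LinearMap.fst ℝ _ _) +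
    (LinearMap.mul ℝ _).compl₁₂ (LinearMap.snd ℝ _ _) (LinearMap.snd ℝ _ _)).compr₂
      (setIntegralEval hK)

theorem l2Form_apply (hK : Bornology.IsBounded K)
    (u v : MvPolynomial (Fin 2) ℝ × MvPolynomial (Fin 2) ℝ) :
    l2Form hK u v = ∫ x in K, eval ![x.1, x.2] (u.1 * v.1 + u.2 * v.2) := rfl

theorem eq_zero_of_l2Form_self_eq_zero (hK : Bornology.IsBounded K) (hKo : IsOpen K)
    (hne : K.Nonempty) {u : MvPolynomial (Fin 2) ℝ × MvPolynomial (Fin 2) ℝ}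
    (h : l2Form hK u u = 0) : u = 0 := by
  have hzero := hKo.eqOn_zero_of_setIntegral_eq_zero
    (continuous_eval_plane (u.1 * u.1 + u.2 * u.2)).continuousOn
    (fun x _ => by
      simpa only [map_add, map_mul] using add_nonneg (mul_self_nonneg _) (mul_self_nonneg _))
    (integrableOn_eval_plane hK _) h
  have hcomp : ∀ x ∈ K, eval ![x.1, x.2] u.1 = 0 ∧ eval ![x.1, x.2] u.2 = 0 := fun x hx => by
    apply mul_self_add_mul_self_eq_zero.mp
    simpa only [map_add, map_mul, Pi.zero_apply] using hzero hx
  exact Prod.ext (eq_zero_of_eval_eq_zero_on_plane hKo hne fun x hx => (hcomp x hx).1)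
    (eq_zero_of_eval_eq_zero_on_plane hKo hne fun x hx => (hcomp x hx).2)

end L2

end MvPolynomial

/-- The restriction of the 2D rotational operator `rot(v) = ∂₁v₂ - ∂₂v₁` to the
`L²(K)`-orthogonal complement `G_{k-2}(K)^⊥` of the gradient space inside `[P_{k-2}(K)]²`
is a (linear) isomorphism onto `P_{k-3}(K)` (with `P_{-1} = {0}` when `k = 2`). -/
theorem rot_iso_on_orth_complement (k : ℕ) (hk : 2 ≤ k) (K : Set (ℝ × ℝ))
    (hKo : IsOpen K) (hKb : Bornology.IsBounded K) (hKm : 0 < volume K) :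
    ∃ S : Submodule ℝ (MvPolynomial (Fin 2) ℝ × MvPolynomial (Fin 2) ℝ),
      (S : Set (MvPolynomial (Fin 2) ℝ × MvPolynomial (Fin 2) ℝ)) =
        {v | v ∈ (restrictTotalDegree (Fin 2) ℝ (k - 2)).prod
              (restrictTotalDegree (Fin 2) ℝ (k - 2)) ∧
          ∀ p ∈ restrictTotalDegree (Fin 2) ℝ (k - 1),
            (∫ x in K, (eval ![x.1, x.2] v.1 * eval ![x.1, x.2] (pderiv 0 p)
              + eval ![x.1, x.2] v.2 * eval ![x.1, x.2] (pderiv 1 p))) = 0} ∧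
      Set.BijOn (fun v : MvPolynomial (Fin 2) ℝ × MvPolynomial (Fin 2) ℝ =>
          pderiv 0 v.2 - pderiv 1 v.1)
        (S : Set (MvPolynomial (Fin 2) ℝ × MvPolynomial (Fin 2) ℝ))
        ((if k = 2 then (⊥ : Submodule ℝ (MvPolynomial (Fin 2) ℝ))
          else restrictTotalDegree (Fin 2) ℝ (k - 3)) :
            Set (MvPolynomial (Fin 2) ℝ)) := by
  obtain ⟨n, rfl⟩ : ∃ n, k = n + 2 := ⟨k - 2, by omega⟩
  have hne : K.Nonempty := nonempty_of_measure_ne_zero hKm.ne'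
  have hbij := (l2Form hKb).bijOn_inf_orthogonal rot
    (fun _ _ => eq_zero_of_l2Form_self_eq_zero hKb hKo hne) (prod_restrictTotalDegree_inf_ker_rot n)
  have htarget : (if n + 2 = 2 then ((⊥ : Submodule ℝ (MvPolynomial (Fin 2) ℝ)) : Set _)
      else restrictTotalDegree (Fin 2) ℝ (n + 2 - 3)) =
      (((restrictTotalDegree (Fin 2) ℝ n).prod (restrictTotalDegree (Fin 2) ℝ n)).map rot :
        Set (MvPolynomial (Fin 2) ℝ)) := by
    rcases n with _ | n
    · rw [map_rot_prod_restrictTotalDegree_zero, if_pos rfl]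
    · rw [map_rot_prod_restrictTotalDegree_succ, if_neg (by omega)]
      rfl
  rw [htarget, show n + 2 - 2 = n by omega, show n + 2 - 1 = n + 1 by omega]
  refine ⟨_, ?_, hbij⟩
  ext v
  simp only [SetLike.mem_coe, Submodule.mem_inf, LinearMap.BilinForm.mem_orthogonal_iff,
    Submodule.mem_map, forall_exists_index, and_imp, forall_apply_eq_imp_iff₂, l2Form_apply,
    grad_apply, Set.mem_ofPred_eq, map_add, map_mul, mul_comm]
end

section
/- Let V, Q be real Hilbert spaces, a: V×V → ℝ continuous and coercive, b: V×Q → ℝ continuous and satisfying the inf-sup condition sup_{v≠0} b(v,q)/‖v‖ ≥ β‖q‖ for all q ∈ Q with β > 0. Then for every f ∈ V* the saddle point problem a(u,v) + b(v,p) = f(v) for all v ∈ V and b(u,q) = 0 for all q ∈ Q has a unique solution (u,p) ∈ V × Q, and ‖u‖ + ‖p‖ ≤ C ‖f‖_{V*} with C depending only on the continuity, coercivity and inf-sup constants. -/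
open RealInnerProductSpace

/-!
Lax–Milgram on the closed subspace `Z = {v | b(v, ·) = 0}` gives `u ∈ Z` with `a(u, z) = f(z)` on
`Z`. Write `T : Q → V` for the Riesz representation of `q ↦ b(·, q)`; then `Z = (range T)ᗮ`, and
the inf-sup condition says `‖T q‖ ≥ β ‖q‖`, so `range T` is closed and equals `Zᗮ`. The residual
`f - a(u, ·)` vanishes on `Z`, hence is represented by some `T p`, which is the pressure. Testing
the first equation with `u` and with arbitrary `v` gives `α ‖u‖ ≤ ‖f‖` and
`β ‖p‖ ≤ ‖f‖ + ‖a‖ ‖u‖`; uniqueness follows from this bound by linearity.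
-/

theorem IsCoercive.exists_forall_apply_eq {V : Type*} [NormedAddCommGroup V]
    [InnerProductSpace ℝ V] [CompleteSpace V] {A : V →L[ℝ] V →L[ℝ] ℝ} (hA : IsCoercive A)
    (f : StrongDual ℝ V) : ∃ u, ∀ v, A u v = f v :=
  ⟨hA.continuousLinearEquivOfBilin.symm ((InnerProductSpace.toDual ℝ V).symm f), fun v => by
    rw [← hA.continuousLinearEquivOfBilin_apply, ContinuousLinearEquiv.apply_symm_apply,
      InnerProductSpace.toDual_symm_apply]⟩

section SaddlePoint

variable {V Q : Type*} [NormedAddCommGroup V] [InnerProductSpace ℝ V]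
  [NormedAddCommGroup Q] [InnerProductSpace ℝ Q]
  {A : V →L[ℝ] V →L[ℝ] ℝ} {B : V →L[ℝ] Q →L[ℝ] ℝ} {α β : ℝ}

def IsSaddlePointSolution (A : V →L[ℝ] V →L[ℝ] ℝ) (B : V →L[ℝ] Q →L[ℝ] ℝ)
    (f : StrongDual ℝ V) (u : V) (p : Q) : Prop :=
  (∀ v, A u v + B v p = f v) ∧ ∀ q, B u q = 0

theorem le_norm_flip_apply_of_le_iSup {q : Q}
    (hq : β * ‖q‖ ≤ ⨆ v : V, B v q / ‖v‖) : β * ‖q‖ ≤ ‖B.flip q‖ :=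
  hq.trans <| ciSup_le fun v => div_le_of_le_mul₀ (norm_nonneg v) (norm_nonneg _) <|
    (Real.le_norm_self _).trans ((B.flip q).le_opNorm v)

theorem isCoercive_bilinearComp_subtypeL (hα : 0 < α) (hcoer : ∀ v, α * ‖v‖ ^ 2 ≤ A v v)
    (K : Submodule ℝ V) : IsCoercive (A.bilinearComp K.subtypeL K.subtypeL) :=
  ⟨α, hα, fun z => by rw [mul_assoc, ← sq]; exact hcoer z⟩

namespace IsSaddlePointSolution

variable {f f' : StrongDual ℝ V} {u u' : V} {p p' : Q}

theorem sub (h : IsSaddlePointSolution A B f u p) (h' : IsSaddlePointSolution A B f' u' p') :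
    IsSaddlePointSolution A B (f - f') (u - u') (p - p') := by
  refine ⟨fun v => ?_, fun q => ?_⟩
  · simp only [map_sub, sub_apply, ← h.1 v, ← h'.1 v]
    ring
  · simp only [map_sub, sub_apply, h.2 q, h'.2 q, sub_zero]

theorem norm_fst_le (hcoer : ∀ v, α * ‖v‖ ^ 2 ≤ A v v)
    (h : IsSaddlePointSolution A B f u p) : α * ‖u‖ ≤ ‖f‖ := by
  have hsq : α * ‖u‖ * ‖u‖ ≤ ‖f‖ * ‖u‖ :=
    calc α * ‖u‖ * ‖u‖ = α * ‖u‖ ^ 2 := by ring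
      _ ≤ A u u := hcoer u
      _ = f u := by linarith [h.1 u, h.2 p]
      _ ≤ ‖f‖ * ‖u‖ := (Real.le_norm_self _).trans (f.le_opNorm u)
  rcases (norm_nonneg u).eq_or_lt with hu | hu
  · rw [← hu, mul_zero]
    exact norm_nonneg f
  · exact le_of_mul_le_mul_right hsq hu

theorem norm_snd_le (hinfsup : ∀ q, β * ‖q‖ ≤ ‖B.flip q‖)
    (h : IsSaddlePointSolution A B f u p) : β * ‖p‖ ≤ ‖f‖ + ‖A‖ * ‖u‖ := by
  have hres : B.flip p = f - A u :=
    ContinuousLinearMap.ext fun v => eq_sub_of_add_eq' (h.1 v)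
  calc β * ‖p‖ ≤ ‖B.flip p‖ := hinfsup p
    _ = ‖f - A u‖ := by rw [hres]
    _ ≤ ‖f‖ + ‖A u‖ := norm_sub_le _ _
    _ ≤ ‖f‖ + ‖A‖ * ‖u‖ := by grw [A.le_opNorm u]

theorem norm_add_norm_le (hα : 0 < α) (hcoer : ∀ v, α * ‖v‖ ^ 2 ≤ A v v) (hβ : 0 < β)
    (hinfsup : ∀ q, β * ‖q‖ ≤ ‖B.flip q‖) (h : IsSaddlePointSolution A B f u p) :
    ‖u‖ + ‖p‖ ≤ (1 / α + (1 + ‖A‖ / α) / β) * ‖f‖ := by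
  have hu : ‖u‖ ≤ ‖f‖ / α := (le_div_iff₀' hα).2 (h.norm_fst_le hcoer)
  have hp : ‖p‖ ≤ (‖f‖ + ‖A‖ * (‖f‖ / α)) / β :=
    (le_div_iff₀' hβ).2 ((h.norm_snd_le hinfsup).trans (by grw [hu]))
  calc ‖u‖ + ‖p‖ ≤ ‖f‖ / α + (‖f‖ + ‖A‖ * (‖f‖ / α)) / β := add_le_add hu hp
    _ = (1 / α + (1 + ‖A‖ / α) / β) * ‖f‖ := by ring

theorem unique (hα : 0 < α) (hcoer : ∀ v, α * ‖v‖ ^ 2 ≤ A v v) (hβ : 0 < β)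
    (hinfsup : ∀ q, β * ‖q‖ ≤ ‖B.flip q‖) (h : IsSaddlePointSolution A B f u p)
    (h' : IsSaddlePointSolution A B f u' p') : u = u' ∧ p = p' := by
  have hbound := (h.sub h').norm_add_norm_le hα hcoer hβ hinfsup
  rw [sub_self, norm_zero, mul_zero] at hbound
  have hu := norm_nonneg (u - u')
  have hp := norm_nonneg (p - p')
  exact ⟨sub_eq_zero.1 (norm_eq_zero.1 (by linarith)),
    sub_eq_zero.1 (norm_eq_zero.1 (by linarith))⟩

end IsSaddlePointSolution

variable [CompleteSpace V]

noncomputable def rieszFlip (B : V →L[ℝ] Q →L[ℝ] ℝ) : Q →L[ℝ] V :=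
  (InnerProductSpace.toDual ℝ V).symm.toContinuousLinearEquiv.toContinuousLinearMap.comp B.flip

@[simp]
theorem inner_rieszFlip_apply (q : Q) (v : V) : ⟪rieszFlip B q, v⟫ = B v q := by
  simp [rieszFlip]

@[simp]
theorem norm_rieszFlip_apply (q : Q) : ‖rieszFlip B q‖ = ‖B.flip q‖ := by
  simp [rieszFlip]

theorem mem_orthogonal_range_rieszFlip {v : V} :
    v ∈ (rieszFlip B).rangeᗮ ↔ ∀ q, B v q = 0 := by
  simp [Submodule.mem_orthogonal]

theorem orthogonal_orthogonal_range_rieszFlip [CompleteSpace Q] (hβ : 0 < β)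
    (hinfsup : ∀ q, β * ‖q‖ ≤ ‖B.flip q‖) :
    (rieszFlip B).rangeᗮᗮ = (rieszFlip B).range := by
  have hanti : AntilipschitzWith β⁻¹.toNNReal (rieszFlip B) :=
    (rieszFlip B).antilipschitz_of_bound fun q => by
      rw [Real.coe_toNNReal _ (inv_nonneg.2 hβ.le), norm_rieszFlip_apply, ← div_eq_inv_mul,
        le_div_iff₀' hβ]
      exact hinfsup q
  rw [Submodule.orthogonal_orthogonal_eq_closure]
  exact ContinuousLinearMap.closed_range_of_antilipschitz hanti

theorem exists_isSaddlePointSolution [CompleteSpace Q] (hα : 0 < α)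
    (hcoer : ∀ v, α * ‖v‖ ^ 2 ≤ A v v) (hβ : 0 < β) (hinfsup : ∀ q, β * ‖q‖ ≤ ‖B.flip q‖)
    (f : StrongDual ℝ V) : ∃ u p, IsSaddlePointSolution A B f u p := by
  set Z := (rieszFlip B).rangeᗮ
  obtain ⟨u, hu⟩ := (isCoercive_bilinearComp_subtypeL hα hcoer Z).exists_forall_apply_eq
    (f.comp Z.subtypeL)
  have hres : (InnerProductSpace.toDual ℝ V).symm (f - A u) ∈ Zᗮ := by
    refine (Submodule.mem_orthogonal' _ _).2 fun z hz => ?_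
    rw [InnerProductSpace.toDual_symm_apply, sub_apply, sub_eq_zero]
    exact (hu ⟨z, hz⟩).symm
  rw [orthogonal_orthogonal_range_rieszFlip hβ hinfsup] at hres
  obtain ⟨p, hp⟩ := hres
  refine ⟨u, p, fun v => ?_, mem_orthogonal_range_rieszFlip.1 u.2⟩
  rw [ContinuousLinearMap.coe_coe] at hp
  rw [← inner_rieszFlip_apply (B := B), hp, InnerProductSpace.toDual_symm_apply,
    sub_apply]
  ring

end SaddlePoint

theorem brezzi_saddle_point_general {V Q : Type*}
    [NormedAddCommGroup V] [InnerProductSpace ℝ V] [CompleteSpace V]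
    [NormedAddCommGroup Q] [InnerProductSpace ℝ Q] [CompleteSpace Q]
    (a : V →ₗ[ℝ] V →ₗ[ℝ] ℝ) (b : V →ₗ[ℝ] Q →ₗ[ℝ] ℝ)
    (M α Mb β : ℝ) (hα : 0 < α) (hβ : 0 < β)
    (hconta : ∀ u v, |a u v| ≤ M * ‖u‖ * ‖v‖)
    (hcoer : ∀ v, α * ‖v‖ ^ 2 ≤ a v v)
    (hcontb : ∀ v q, |b v q| ≤ Mb * ‖v‖ * ‖q‖)
    (hinfsup : ∀ q : Q, β * ‖q‖ ≤ ⨆ v : V, b v q / ‖v‖) :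
    ∃ C : ℝ, 0 < C ∧ ∀ f : V →L[ℝ] ℝ,
      (∃! up : V × Q, (∀ v, a up.1 v + b v up.2 = f v) ∧ (∀ q, b up.1 q = 0)) ∧
      (∀ up : V × Q, ((∀ v, a up.1 v + b v up.2 = f v) ∧ (∀ q, b up.1 q = 0)) →
        ‖up.1‖ + ‖up.2‖ ≤ C * ‖f‖) := by
  let A := a.mkContinuous₂ M hconta
  let B := b.mkContinuous₂ Mb hcontb
  have hinfsup' (q : Q) : β * ‖q‖ ≤ ‖B.flip q‖ := le_norm_flip_apply_of_le_iSup (hinfsup q)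
  refine ⟨1 / α + (1 + ‖A‖ / α) / β, by positivity, fun f => ⟨?_, fun up h =>
    IsSaddlePointSolution.norm_add_norm_le (A := A) (B := B) hα hcoer hβ hinfsup' h⟩⟩
  obtain ⟨u, p, h⟩ := exists_isSaddlePointSolution (A := A) (B := B) hα hcoer hβ hinfsup' f
  refine ⟨(u, p), h, fun up h' => ?_⟩
  obtain ⟨hu, hp⟩ := IsSaddlePointSolution.unique (A := A) (B := B) hα hcoer hβ hinfsup' h' h
  exact Prod.ext hu hp

/-- Abstract saddle-point (Brezzi) theory: if `a` is continuous and coercive and `b` is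
continuous and satisfies the inf-sup condition with constant `β > 0`, then for every
`f ∈ V*` the saddle point problem has a unique solution `(u,p)`, and
`‖u‖ + ‖p‖ ≤ C ‖f‖` with `C` depending only on the constants. -/
theorem brezzi_saddle_point {V Q : Type*}
    [NormedAddCommGroup V] [InnerProductSpace ℝ V] [CompleteSpace V]
    [NormedAddCommGroup Q] [InnerProductSpace ℝ Q] [CompleteSpace Q]
    (a : V →ₗ[ℝ] V →ₗ[ℝ] ℝ) (b : V →ₗ[ℝ] Q →ₗ[ℝ] ℝ)
    (M α Mb β : ℝ) (hM : 0 < M) (hα : 0 < α) (hMb : 0 < Mb) (hβ : 0 < β)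
    (hconta : ∀ u v, |a u v| ≤ M * ‖u‖ * ‖v‖)
    (hcoer : ∀ v, α * ‖v‖ ^ 2 ≤ a v v)
    (hcontb : ∀ v q, |b v q| ≤ Mb * ‖v‖ * ‖q‖)
    (hinfsup : ∀ q : Q, β * ‖q‖ ≤ ⨆ v : V, b v q / ‖v‖) :
    ∃ C : ℝ, 0 < C ∧ ∀ f : V →L[ℝ] ℝ,
      (∃! up : V × Q, (∀ v, a up.1 v + b v up.2 = f v) ∧ (∀ q, b up.1 q = 0)) ∧
      (∀ up : V × Q, ((∀ v, a up.1 v + b v up.2 = f v) ∧ (∀ q, b up.1 q = 0)) →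
        ‖up.1‖ + ‖up.2‖ ≤ C * ‖f‖) :=
  brezzi_saddle_point_general a b M α Mb β hα hβ hconta hcoer hcontb hinfsup
end

section
/- Let V, Q be Hilbert spaces, b: V×Q → ℝ continuous bilinear satisfying the continuous inf-sup condition with constant β > 0. Suppose V_h ⊆ V, Q_h ⊆ Q are subspaces and there exists a linear operator π_h: V → V_h (a Fortin operator) with b(π_h v, q_h) = b(v, q_h) for all v ∈ V, q_h ∈ Q_h, and ‖π_h v‖ ≤ c_π ‖v‖ for all v ∈ V. Then the discrete inf-sup condition holds: sup_{v_h ∈ V_h, v_h ≠ 0} b(v_h, q_h)/‖v_h‖ ≥ (β/c_π) ‖q_h‖ for all q_h ∈ Q_h. -/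
/-- Fortin's criterion: if `b` is continuous and satisfies the continuous inf-sup
condition with constant `β > 0`, and `π_h : V → V_h` is linear with
`b(π_h v, q_h) = b(v, q_h)` for all `v ∈ V, q_h ∈ Q_h` and `‖π_h v‖ ≤ c_π ‖v‖`, then the
discrete inf-sup condition holds with constant `β / c_π`. -/
theorem fortin_criterion {V Q : Type*}
    [NormedAddCommGroup V] [InnerProductSpace ℝ V] [CompleteSpace V]
    [NormedAddCommGroup Q] [InnerProductSpace ℝ Q] [CompleteSpace Q]
    (b : V →ₗ[ℝ] Q →ₗ[ℝ] ℝ) (Mb β cπ : ℝ) (hMb : 0 < Mb) (hβ : 0 < β) (hcπ : 0 < cπ)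
    (hcontb : ∀ v q, |b v q| ≤ Mb * ‖v‖ * ‖q‖)
    (hinfsup : ∀ q : Q, β * ‖q‖ ≤ ⨆ v : V, b v q / ‖v‖)
    (Vh : Submodule ℝ V) (Qh : Submodule ℝ Q) (πh : V →ₗ[ℝ] V)
    (hrange : ∀ v : V, πh v ∈ Vh)
    (hpres : ∀ v : V, ∀ qh ∈ Qh, b (πh v) qh = b v qh)
    (hbound : ∀ v : V, ‖πh v‖ ≤ cπ * ‖v‖) :
    ∀ qh ∈ Qh, (β / cπ) * ‖qh‖ ≤ ⨆ vh : Vh, b (vh : V) qh / ‖(vh : V)‖ := by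
  intro qh hqh
  set S := ⨆ vh : Vh, b (vh : V) qh / ‖(vh : V)‖ with hS
  -- each term is bounded by Mb * ‖qh‖
  have hterm : ∀ vh : Vh, b (vh : V) qh / ‖(vh : V)‖ ≤ Mb * ‖qh‖ := by
    intro vh
    rcases eq_or_ne (vh : V) 0 with h0 | h0
    · simp [h0]
      positivity
    · rw [div_le_iff₀ (norm_pos_iff.mpr h0)]
      calc b (vh : V) qh ≤ |b (vh : V) qh| := le_abs_self _
        _ ≤ Mb * ‖(vh : V)‖ * ‖qh‖ := hcontb _ _
        _ = Mb * ‖qh‖ * ‖(vh : V)‖ := by ring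
  have hbdd : BddAbove (Set.range fun vh : Vh => b (vh : V) qh / ‖(vh : V)‖) :=
    ⟨Mb * ‖qh‖, by rintro x ⟨vh, rfl⟩; exact hterm vh⟩
  have hS0 : 0 ≤ S := by
    have := le_ciSup hbdd (⟨0, Vh.zero_mem⟩ : Vh)
    simpa using this
  -- key: every continuous term is ≤ cπ * S
  have hkey : ∀ v : V, b v qh / ‖v‖ ≤ cπ * S := by
    intro v
    rcases eq_or_ne v 0 with rfl | hv
    · simp
      positivity
    · rw [div_le_iff₀ (norm_pos_iff.mpr hv)]
      have h1 : b (πh v) qh ≤ S * ‖πh v‖ := by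
        rcases eq_or_ne (πh v) 0 with h0 | h0
        · simp [h0]
        · have := le_ciSup hbdd (⟨πh v, hrange v⟩ : Vh)
          rw [← hS] at this
          calc b (πh v) qh = (b (πh v) qh / ‖πh v‖) * ‖πh v‖ := by
                rw [div_mul_cancel₀ _ (norm_ne_zero_iff.mpr h0)]
            _ ≤ S * ‖πh v‖ := by
                exact mul_le_mul_of_nonneg_right this (norm_nonneg _)
      calc b v qh = b (πh v) qh := (hpres v qh hqh).symm
        _ ≤ S * ‖πh v‖ := h1
        _ ≤ S * (cπ * ‖v‖) := mul_le_mul_of_nonneg_left (hbound v) hS0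
        _ = cπ * S * ‖v‖ := by ring
  have h2 : β * ‖qh‖ ≤ cπ * S := le_trans (hinfsup qh) (ciSup_le hkey)
  rw [div_mul_eq_mul_div, div_le_iff₀ hcπ]
  linarith
end

section
/- Let V be a Hilbert space with continuous coercive symmetric bilinear form a, and for a finite-dimensional subspace V_h define the projection Π: V_h → P (P ⊆ V_h a subspace containing constants factored out appropriately) by a(p, v - Πv) = 0 for all p ∈ P and P⁰(v - Πv) = 0, where P⁰ is a fixed linear functional with P⁰ nonvanishing on the a-kernel directions of P. If S is a symmetric bilinear form on V_h with c_* a(v,v) ≤ S(v,v) ≤ c* a(v,v) for all v with Πv = 0, then a_h(u,v) := a(Πu, Πv) + S((I-Π)u, (I-Π)v) satisfies: (i) a_h(p, v) = a(p, v) for all p ∈ P, v ∈ V_h (consistency), and (ii) there exist α_*, α* > 0 with α_* a(v,v) ≤ a_h(v,v) ≤ α* a(v,v) for all v ∈ V_h (stability), where α_* = min(1, c_*)/2-type constants depending only on c_*, c*. -/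
/-- Abstract VEM consistency–stability lemma.  Let `a` be a symmetric positive
semidefinite bilinear form on `V`, `P ⊆ V` a subspace, `Π` a linear projection onto `P`
(`Pr v ∈ P`, `Pr p = p` for `p ∈ P`) which is `a`-orthogonal (`a(p, v - Πv) = 0` for all
`p ∈ P`), and `S` a symmetric bilinear form with `c_* a(v,v) ≤ S(v,v) ≤ c* a(v,v)`
whenever `Pr v = 0`.  Then `a_h(u,v) := a(Πu,Πv) + S(u-Πu, v-Πv)` satisfies
(i) consistency `a_h(p,v) = a(p,v)` for `p ∈ P`, and (ii) stability
`min 1 c_* · a(v,v) ≤ a_h(v,v) ≤ max 1 c* · a(v,v)` for all `v`, with constants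
depending only on `c_*, c*`. -/
theorem vem_consistency_stability {V : Type*} [AddCommGroup V] [Module ℝ V]
    (a S : V →ₗ[ℝ] V →ₗ[ℝ] ℝ) (P : Submodule ℝ V) (Pr : V →ₗ[ℝ] V)
    (cs cS : ℝ) (hcs : 0 < cs) (hcS : cs ≤ cS)
    (hasymm : ∀ u v, a u v = a v u) (hapos : ∀ v, 0 ≤ a v v)
    (hPrP : ∀ v, Pr v ∈ P) (hPrid : ∀ p ∈ P, Pr p = p)
    (horth : ∀ p ∈ P, ∀ v, a p (v - Pr v) = 0)
    (hSsymm : ∀ u v, S u v = S v u)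
    (hScomp : ∀ v, Pr v = 0 → cs * a v v ≤ S v v ∧ S v v ≤ cS * a v v) :
    (∀ p ∈ P, ∀ v,
      a (Pr p) (Pr v) + S (p - Pr p) (v - Pr v) = a p v) ∧
    (∀ v, min 1 cs * a v v ≤ a (Pr v) (Pr v) + S (v - Pr v) (v - Pr v) ∧
      a (Pr v) (Pr v) + S (v - Pr v) (v - Pr v) ≤ max 1 cS * a v v) := by
  -- the complement part lies in the kernel of Pr
  have hker : ∀ v, Pr (v - Pr v) = 0 := by
    intro v
    rw [map_sub, hPrid (Pr v) (hPrP v), sub_self]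
  -- Pythagoras for the a-seminorm
  have hpyth : ∀ v, a v v = a (Pr v) (Pr v) + a (v - Pr v) (v - Pr v) := by
    intro v
    have h1 : a (Pr v) (v - Pr v) = 0 := horth (Pr v) (hPrP v) v
    have h2 : a (v - Pr v) (Pr v) = 0 := by rw [hasymm]; exact h1
    have hv : v = Pr v + (v - Pr v) := by abel
    calc a v v = a (Pr v + (v - Pr v)) (Pr v + (v - Pr v)) := by rw [← hv]
      _ = a (Pr v) (Pr v) + a (Pr v) (v - Pr v) + (a (v - Pr v) (Pr v)
            + a (v - Pr v) (v - Pr v)) := by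
          simp [map_add, LinearMap.add_apply]; ring
      _ = a (Pr v) (Pr v) + a (v - Pr v) (v - Pr v) := by rw [h1, h2]; ring
  constructor
  · intro p hp v
    have hpp : p - Pr p = 0 := by rw [hPrid p hp, sub_self]
    have hS0 : S (p - Pr p) (v - Pr v) = 0 := by rw [hpp]; simp
    have : a (Pr p) (Pr v) = a p v := by
      rw [hPrid p hp]
      have h1 : a p (v - Pr v) = 0 := horth p hp v
      have h2 : a p v - a p (Pr v) = a p (v - Pr v) := by rw [map_sub]
      linarith
    rw [hS0, this, add_zero]
  · intro v
    obtain ⟨hlo, hhi⟩ := hScomp (v - Pr v) (hker v)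
    have hP := hpyth v
    have hapos1 := hapos (Pr v)
    have hapos2 := hapos (v - Pr v)
    have hmin1 : min 1 cs ≤ 1 := min_le_left _ _
    have hmin2 : min 1 cs ≤ cs := min_le_right _ _
    have hmax1 : (1:ℝ) ≤ max 1 cS := le_max_left _ _
    have hmax2 : cS ≤ max 1 cS := le_max_right _ _
    constructor
    · nlinarith
    · nlinarith
end
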